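/- (Annular Poincaré inequality with radial derivative) There exists a universal constant C = C(d) > 0 such that for every open cone O ⊆ ℝ^d and every f ∈ C¹(cl(B₄ \ B_{1/4}) ∩ O): ∫_{(B₄ \ B_{1/4}) ∩ O} f² dx ≤ C ( ∫_{(B₄ \ B_{1/4}) ∩ O} (x·∇f(x) − f(x))² dx + ∫_{(B₂ \ B_{1/2}) ∩ O} f² dx ). -/

import Mathlib

/-!
Along each ray, the identity `f(c y)/c - f(y) = ∫₁ᶜ (x·∇f - f)(r y) / r² dr` and Cauchy–Schwarz
bound `f(c y)²` by `f(y)²` plus the integral of `(x·∇f - f)²` over the segment between `y` and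
`c y`. Integrating over `y` in the middle annulus `A = (B₂ \ B̄_{1/2}) ∩ O` and swapping the
integrals (Fubini, then the scaling `y ↦ r y`, which preserves the cone `O`) controls `f²` on
`2 A` and on `2⁻¹ A`; together with `A` these cover `(B₄ \ B̄_{1/4}) ∩ O`.
-/

open MeasureTheory Metric Set Filter Topology Module
open scoped Pointwise ENNReal Interval

section FDerivBound

variable {E F : Type*} [NormedAddCommGroup E] [NormedSpace ℝ E] [NormedAddCommGroup F]
  [NormedSpace ℝ F] {f : E → F} {s : Set E}

theorem ContDiffWithinAt.exists_bddAbove_norm_fderiv {x : E} (hf : ContDiffWithinAt ℝ 1 f s x) :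
    ∃ t ∈ 𝓝[s] x, BddAbove ((fun y => ‖fderiv ℝ f y‖) '' (t ∩ interior s)) := by
  obtain ⟨u, hu, -, f', hf', hf'c⟩ :=
    (contDiffWithinAt_succ_iff_hasFDerivWithinAt (n := 0) (by simp)).1 (by simpa using hf)
  have hxu : x ∈ u := mem_of_mem_nhdsWithin (mem_insert x s) hu
  have hbound : ∀ᶠ y in 𝓝[insert x s] x, ‖f' y‖ < ‖f' x‖ + 1 :=
    nhdsWithin_le_of_mem hu <| hf'c.continuousWithinAt.norm
      |>.eventually_lt_const (lt_add_one _)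
  refine ⟨_, nhdsWithin_mono _ (subset_insert x s)
    (hbound.and (eventually_eventually_nhdsWithin.2 hu)), ‖f' x‖ + 1, ?_⟩
  rintro _ ⟨y, ⟨⟨hy, hyu⟩, hys⟩, rfl⟩
  -- at an interior point `u` is a genuine neighbourhood, so `f' y` is the Fréchet derivative
  have hins : insert x s ∈ 𝓝 y :=
    mem_of_superset (isOpen_interior.mem_nhds hys) (interior_subset.trans (subset_insert x s))
  have hu_nhds : u ∈ 𝓝 y := by rwa [nhdsWithin_eq_nhds.2 hins] at hyu
  show ‖fderiv ℝ f y‖ ≤ _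
  rw [((hf' y (mem_of_mem_nhds hu_nhds)).hasFDerivAt hu_nhds).fderiv]
  exact hy.le

theorem IsCompact.bddAbove_norm_fderiv (hs : IsCompact s) (hf : ContDiffOn ℝ 1 f s) :
    BddAbove ((fun y => ‖fderiv ℝ f y‖) '' interior s) := by
  simpa [inter_eq_right.2 interior_subset] using
    hs.induction_on (p := fun t => BddAbove ((fun y => ‖fderiv ℝ f y‖) '' (t ∩ interior s)))
      (by simp) (fun t₁ t₂ h ht₂ => ht₂.mono (image_mono (inter_subset_inter_left _ h)))
      (fun t₁ t₂ ht₁ ht₂ => by rw [union_inter_distrib_right, image_union]; exact ht₁.union ht₂)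
      (fun x hx => (hf x hx).exists_bddAbove_norm_fderiv)

end FDerivBound

section Integrals

variable {α : Type*} [MeasurableSpace α] {μ : Measure α} {s t U : Set α} {g : α → ℝ}

theorem ContinuousOn.integrableOn_of_bound [TopologicalSpace α] [OpensMeasurableSpace α]
    (hs : MeasurableSet s) (hμs : μ s ≠ ∞) (hg : ContinuousOn g s) {M : ℝ}
    (hM : ∀ x ∈ s, ‖g x‖ ≤ M) : IntegrableOn g s μ :=
  .of_bound hμs.lt_top (hg.aestronglyMeasurable hs) M (ae_restrict_of_forall_mem hs hM)

theorem setIntegral_le_add_of_subset_union (hg : ∀ x, 0 ≤ g x) (hU : U ⊆ s ∪ t)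
    (hs : IntegrableOn g s μ) (ht : IntegrableOn g t μ) :
    ∫ x in U, g x ∂μ ≤ ∫ x in s, g x ∂μ + ∫ x in t, g x ∂μ := by
  rw [← integral_add_measure hs ht]
  exact integral_mono_measure ((Measure.restrict_mono hU le_rfl).trans
    (Measure.restrict_union_le s t)) (ae_of_all _ hg) (Integrable.add_measure hs ht)

theorem sq_setIntegral_le (hs : μ s ≠ ∞) (hg : IntegrableOn g s μ)
    (hg2 : IntegrableOn (fun x => g x ^ 2) s μ) :
    (∫ x in s, g x ∂μ) ^ 2 ≤ μ.real s * ∫ x in s, g x ^ 2 ∂μ := by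
  rcases eq_or_ne (μ s) 0 with h0 | h0
  · simp [Measure.restrict_eq_zero.2 h0]
  have hjensen := (Even.convexOn_pow (𝕜 := ℝ) even_two).map_set_average_le
    (continuous_pow 2).continuousOn isClosed_univ h0 hs (ae_of_all _ fun _ => mem_univ _) hg hg2
  have hpos : 0 < μ.real s := ENNReal.toReal_pos h0 hs
  simp only [setAverage_eq, smul_eq_mul] at hjensen
  rw [mul_pow, inv_pow, ← div_eq_inv_mul, ← div_eq_inv_mul,
    div_le_div_iff₀ (by positivity) hpos] at hjensen
  nlinarith

theorem IntegrableOn.setIntegral_prod_left {β : Type*} [MeasurableSpace β] {ν : Measure β}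
    [SFinite ν] [SFinite μ] {F : α × β → ℝ} {A : Set α} {B : Set β}
    (hF : IntegrableOn F (A ×ˢ B) (μ.prod ν)) :
    IntegrableOn (fun x => ∫ y in B, F (x, y) ∂ν) A μ := by
  rw [IntegrableOn, ← Measure.prod_restrict] at hF
  exact hF.integral_prod_left

end Integrals

theorem Real.volume_real_uIoc {a b : ℝ} : volume.real (Ι a b) = |b - a| := by
  rw [measureReal_def, Real.volume_uIoc, ENNReal.toReal_ofReal (abs_nonneg _)]

theorem sq_intervalIntegral_le {u : ℝ → ℝ} {a b : ℝ} (hu : ContinuousOn u [[a, b]]) :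
    (∫ r in a..b, u r) ^ 2 ≤ |b - a| * ∫ r in Ι a b, u r ^ 2 := by
  rw [← sq_abs, intervalIntegral.abs_integral_eq_abs_integral_uIoc, sq_abs,
    ← Real.volume_real_uIoc]
  exact sq_setIntegral_le measure_Ioc_lt_top.ne
    (hu.integrableOn_uIcc.mono_set uIoc_subset_uIcc)
    ((hu.pow 2).integrableOn_uIcc.mono_set uIoc_subset_uIcc)

section ConeAnnulus

variable {E : Type*} [NormedAddCommGroup E] {O : Set E} {r R : ℝ}

def coneAnnulus (O : Set E) (r R : ℝ) : Set E := (ball 0 R \ closedBall 0 r) ∩ O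

theorem mem_coneAnnulus {x : E} : x ∈ coneAnnulus O r R ↔ (r < ‖x‖ ∧ ‖x‖ < R) ∧ x ∈ O := by
  simp [coneAnnulus, and_comm]

theorem IsOpen.coneAnnulus (hO : IsOpen O) : IsOpen (coneAnnulus O r R) :=
  (isOpen_ball.sdiff isClosed_closedBall).inter hO

theorem coneAnnulus_subset_ball : coneAnnulus O r R ⊆ ball 0 R := fun _ hx => hx.1.1

theorem coneAnnulus_mono {r' R' : ℝ} (hr : r' ≤ r) (hR : R ≤ R') :
    coneAnnulus O r R ⊆ coneAnnulus O r' R' := fun x hx => by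
  rw [mem_coneAnnulus] at hx ⊢
  exact ⟨⟨hr.trans_lt hx.1.1, hx.1.2.trans_le hR⟩, hx.2⟩

theorem isCompact_closure_coneAnnulus [ProperSpace E] : IsCompact (closure (coneAnnulus O r R)) :=
  (isCompact_closedBall 0 R).of_isClosed_subset isClosed_closure
    (closure_minimal (coneAnnulus_subset_ball.trans ball_subset_closedBall) isClosed_closedBall)

variable [NormedSpace ℝ E]

theorem smul_coneAnnulus_subset (hcone : ∀ x ∈ O, ∀ l : ℝ, 0 < l → l • x ∈ O) {t : ℝ}
    (ht : 0 < t) : t • coneAnnulus O r R ⊆ coneAnnulus O (t * r) (t * R) := by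
  rintro _ ⟨x, hx, rfl⟩
  rw [mem_coneAnnulus] at hx ⊢
  rw [norm_smul, Real.norm_of_nonneg ht.le]
  exact ⟨⟨mul_lt_mul_of_pos_left hx.1.1 ht, mul_lt_mul_of_pos_left hx.1.2 ht⟩,
    hcone x hx.2 t ht⟩

theorem smul_coneAnnulus_subset_of_mem_Icc (hcone : ∀ x ∈ O, ∀ l : ℝ, 0 < l → l • x ∈ O)
    (hr : 0 ≤ r) (hR : 0 ≤ R) {c : ℝ} (hc : c ∈ Icc (1 / 2 : ℝ) 2) :
    c • coneAnnulus O r R ⊆ coneAnnulus O (r / 2) (2 * R) :=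
  (smul_coneAnnulus_subset hcone (by linarith [hc.1])).trans
    (coneAnnulus_mono (by nlinarith [hc.1]) (by nlinarith [hc.2]))

theorem coneAnnulus_subset_union (hcone : ∀ x ∈ O, ∀ l : ℝ, 0 < l → l • x ∈ O)
    (hrR : 2 * r < R) :
    coneAnnulus O (r / 2) (2 * R) ⊆
      coneAnnulus O r R ∪ (2 : ℝ) • coneAnnulus O r R ∪ (2⁻¹ : ℝ) • coneAnnulus O r R := by
  intro x hx
  rw [mem_coneAnnulus] at hx
  obtain ⟨⟨hlow, hhigh⟩, hxO⟩ := hx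
  rcases le_or_gt ‖x‖ r with hxr | hxr
  · refine Or.inr ⟨(2 : ℝ) • x, ?_, inv_smul_smul₀ two_ne_zero x⟩
    rw [mem_coneAnnulus, norm_smul, Real.norm_two]
    exact ⟨⟨by linarith, by linarith⟩, hcone x hxO 2 two_pos⟩
  rcases lt_or_ge ‖x‖ R with hxR | hxR
  · exact Or.inl (Or.inl (mem_coneAnnulus.2 ⟨⟨hxr, hxR⟩, hxO⟩))
  · refine Or.inl (Or.inr ⟨(2⁻¹ : ℝ) • x, ?_, smul_inv_smul₀ two_ne_zero x⟩)
    rw [mem_coneAnnulus, norm_smul, norm_inv, Real.norm_two]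
    exact ⟨⟨by linarith, by linarith⟩, hcone x hxO 2⁻¹ (by norm_num)⟩

end ConeAnnulus

section RadialDefect

variable {E : Type*} [NormedAddCommGroup E] [NormedSpace ℝ E] {f : E → ℝ} {U : Set E}

/-- `x · ∇f(x) - f(x)`. -/
noncomputable def radialDefect (f : E → ℝ) (x : E) : ℝ := fderiv ℝ f x x - f x

theorem hasDerivAt_apply_smul_div {x : E} {r : ℝ} (hr : r ≠ 0)
    (hf : DifferentiableAt ℝ f (r • x)) :
    HasDerivAt (fun t : ℝ => f (t • x) / t) (radialDefect f (r • x) / r ^ 2) r := by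
  have hray : HasDerivAt (fun t : ℝ => f (t • x)) (fderiv ℝ f (r • x) x) r :=
    hf.hasFDerivAt.comp_hasDerivAt r (by simpa using (hasDerivAt_id r).smul_const x)
  refine (hray.div (hasDerivAt_id r) hr).congr_deriv ?_
  simp only [radialDefect, map_smul, smul_eq_mul, id_eq]
  ring

theorem continuousOn_radialDefect (hU : IsOpen U) (hf : ContDiffOn ℝ 1 f U) :
    ContinuousOn (radialDefect f) U :=
  ((hf.continuousOn_fderiv_of_isOpen hU le_rfl).clm_apply continuousOn_id).sub hf.continuousOn

theorem exists_bound_radialDefect (hU : IsOpen U) (hK : IsCompact (closure U))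
    (hf : ContDiffOn ℝ 1 f (closure U)) : ∃ M, ∀ x ∈ U, |radialDefect f x| ≤ M := by
  obtain ⟨M₁, hM₁⟩ := hK.bddAbove_norm_fderiv hf
  obtain ⟨M₂, hM₂⟩ := hK.exists_bound_of_continuousOn hf.continuousOn
  obtain ⟨R, hR⟩ := hK.exists_bound_of_continuousOn continuousOn_id
  refine ⟨M₁ * R + M₂, fun x hx => ?_⟩
  have hxK : x ∈ closure U := subset_closure hx
  have hfd : ‖fderiv ℝ f x‖ ≤ M₁ := hM₁ ⟨x, interior_maximal subset_closure hU hx, rfl⟩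
  calc |radialDefect f x| ≤ ‖fderiv ℝ f x x‖ + ‖f x‖ := abs_sub _ _
    _ ≤ ‖fderiv ℝ f x‖ * ‖x‖ + ‖f x‖ := add_le_add ((fderiv ℝ f x).le_opNorm x) le_rfl
    _ ≤ M₁ * R + M₂ := add_le_add
      (mul_le_mul hfd (hR x hxK) (norm_nonneg _) ((norm_nonneg _).trans hfd)) (hM₂ x hxK)

theorem apply_smul_div_sub_eq_integral {y : E} {a b : ℝ} (h0 : (0 : ℝ) ∉ [[a, b]])
    (hf : ∀ r ∈ [[a, b]], DifferentiableAt ℝ f (r • y))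
    (hcont : ContinuousOn (fun r => radialDefect f (r • y) / r ^ 2) [[a, b]]) :
    f (b • y) / b - f (a • y) / a = ∫ r in a..b, radialDefect f (r • y) / r ^ 2 :=
  (intervalIntegral.integral_eq_sub_of_hasDerivAt
    (fun r hr => hasDerivAt_apply_smul_div (ne_of_mem_of_not_mem hr h0) (hf r hr))
    hcont.intervalIntegrable).symm

theorem sq_apply_smul_le (hU : IsOpen U) (hf : ContDiffOn ℝ 1 f U) {y : E} {c : ℝ}
    (hc : c ∈ Icc (1 / 2 : ℝ) 2) (hray : ∀ r ∈ [[1, c]], r • y ∈ U) :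
    f (c • y) ^ 2 ≤ 8 * f y ^ 2 + 128 * ∫ r in Ι 1 c, radialDefect f (r • y) ^ 2 := by
  have hhalf : ∀ r ∈ [[1, c]], 1 / 2 ≤ r := fun r hr =>
    le_trans (le_min (by norm_num) hc.1) hr.1
  have hHcont : ContinuousOn (fun r => radialDefect f (r • y)) [[1, c]] :=
    (continuousOn_radialDefect hU hf).comp (by fun_prop) hray
  have hcont : ContinuousOn (fun r => radialDefect f (r • y) / r ^ 2) [[1, c]] :=
    hHcont.div (by fun_prop) fun r hr => by have := hhalf r hr; positivity
  set J := ∫ r in (1 : ℝ)..c, radialDefect f (r • y) / r ^ 2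
  have hc0 : c ≠ 0 := by linarith [hc.1]
  have hJ : f (c • y) = c * (f y + J) := by
    have := apply_smul_div_sub_eq_integral (fun h => by linarith [hhalf 0 h])
      (fun r hr => (hf.differentiableOn one_ne_zero _ (hray r hr)).differentiableAt
        (hU.mem_nhds (hray r hr))) hcont
    rw [one_smul, div_one] at this
    field_simp at this ⊢
    linarith
  have hJ2 : J ^ 2 ≤ 16 * ∫ r in Ι 1 c, radialDefect f (r • y) ^ 2 := calc
    J ^ 2 ≤ |c - 1| * ∫ r in Ι 1 c, (radialDefect f (r • y) / r ^ 2) ^ 2 :=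
      sq_intervalIntegral_le hcont
    _ ≤ 1 * ∫ r in Ι 1 c, 16 * radialDefect f (r • y) ^ 2 := by
      refine mul_le_mul (abs_le.2 ⟨by linarith [hc.1], by linarith [hc.2]⟩) (setIntegral_mono_on
        ((hcont.pow 2).integrableOn_uIcc.mono_set uIoc_subset_uIcc)
        (((hHcont.pow 2).const_smul (16 : ℝ)).integrableOn_uIcc.mono_set uIoc_subset_uIcc)
        measurableSet_uIoc fun r hr => ?_) (integral_nonneg fun r => sq_nonneg _) zero_le_one
      have hr4 : (1 / 2 : ℝ) ^ 4 ≤ r ^ 4 :=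
        pow_le_pow_left₀ (by norm_num) (hhalf r (uIoc_subset_uIcc hr)) 4
      rw [div_pow, ← pow_mul, div_le_iff₀ (by positivity)]
      norm_num at hr4 ⊢
      nlinarith [mul_le_mul_of_nonneg_left hr4 (sq_nonneg (radialDefect f (r • y)))]
    _ = 16 * ∫ r in Ι 1 c, radialDefect f (r • y) ^ 2 := by
      rw [one_mul, integral_const_mul]
  have hc2 : c ^ 2 ≤ 4 := by nlinarith [hc.1, hc.2]
  rw [hJ]
  nlinarith [sq_nonneg (f y - J), mul_le_mul_of_nonneg_right hc2 (sq_nonneg (f y + J))]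

end RadialDefect

theorem ContinuousOn.integrableOn_prod_smul {E : Type*} [NormedAddCommGroup E] [NormedSpace ℝ E]
    [MeasurableSpace E] [BorelSpace E] {μ : Measure E} [SFinite μ] {g : E → ℝ} {U A : Set E}
    {s : Set ℝ} {M : ℝ}
    (hg : ContinuousOn g U) (hM : ∀ x ∈ U, ‖g x‖ ≤ M) (hA : MeasurableSet A) (hAfin : μ A ≠ ∞)
    (hs : MeasurableSet s) (hsfin : volume s ≠ ∞) (hAU : ∀ r ∈ s, ∀ y ∈ A, r • y ∈ U) :
    IntegrableOn (fun p : E × ℝ => g (p.2 • p.1)) (A ×ˢ s) (μ.prod volume) := by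
  have hmaps : MapsTo (fun p : E × ℝ => p.2 • p.1) (A ×ˢ s) U := fun p hp => hAU _ hp.2 _ hp.1
  exact (hg.comp (by fun_prop) hmaps).integrableOn_of_bound (hA.prod hs)
    (by rw [Measure.prod_prod]; exact ENNReal.mul_ne_top hAfin hsfin) fun p hp => hM _ (hmaps hp)

section HaarMeasure

variable {E : Type*} [NormedAddCommGroup E] [NormedSpace ℝ E] [FiniteDimensional ℝ E]
  [MeasurableSpace E] [BorelSpace E] (μ : Measure E) [μ.IsAddHaarMeasure]

theorem integral_integral_comp_smul_le {g : E → ℝ} {A S : Set E} {s : Set ℝ} {a : ℝ}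
    (ha : 0 < a) (hs : MeasurableSet s) (hs_fin : volume s ≠ ∞) (has : ∀ r ∈ s, a ≤ r)
    (hg : ∀ x, 0 ≤ g x) (hgS : IntegrableOn g S μ) (hAS : ∀ r ∈ s, r • A ⊆ S)
    (hint : IntegrableOn (fun p : E × ℝ => g (p.2 • p.1)) (A ×ˢ s) (μ.prod volume)) :
    ∫ y in A, (∫ r in s, g (r • y)) ∂μ ≤
      volume.real s * ((a ^ finrank ℝ E)⁻¹ * ∫ x in S, g x ∂μ) := by
  have hint' : Integrable (Function.uncurry fun y (r : ℝ) => g (r • y))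
      ((μ.restrict A).prod (volume.restrict s)) := by
    rwa [Measure.prod_restrict]
  rw [integral_integral_swap hint', ← smul_eq_mul, ← setIntegral_const]
  refine setIntegral_mono_on hint'.integral_prod_right (integrableOn_const hs_fin) hs
    fun r hr => ?_
  have hr0 : 0 < r := ha.trans_le (has r hr)
  rw [Measure.setIntegral_comp_smul_of_pos μ g A hr0, smul_eq_mul]
  exact mul_le_mul (inv_anti₀ (by positivity) (pow_le_pow_left₀ ha.le (has r hr) _))
    (setIntegral_mono_set hgS (ae_of_all _ hg) (hAS r hr).eventuallyLE) (integral_nonneg hg)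
    (by positivity)

theorem integral_integral_sq_radialDefect_smul_le {U A : Set E} {f : E → ℝ} {M c : ℝ}
    (hU : IsOpen U) (hUfin : μ U ≠ ∞) (hA : MeasurableSet A)
    (hAU : ∀ r ∈ Icc (1 / 2 : ℝ) 2, r • A ⊆ U) (hf : ContDiffOn ℝ 1 f U)
    (hM : ∀ x ∈ U, |radialDefect f x| ≤ M) (hc : c ∈ Icc (1 / 2 : ℝ) 2) :
    IntegrableOn (fun y => ∫ r in Ι 1 c, radialDefect f (r • y) ^ 2) A μ ∧
      ∫ y in A, (∫ r in Ι 1 c, radialDefect f (r • y) ^ 2) ∂μ ≤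
        2 ^ finrank ℝ E * ∫ x in U, radialDefect f x ^ 2 ∂μ := by
  have hIoc : Ι 1 c ⊆ Icc (1 / 2) 2 :=
    uIoc_subset_uIcc.trans (uIcc_subset_Icc ⟨by norm_num, by norm_num⟩ hc)
  have hAfin : μ A ≠ ∞ :=
    ((measure_mono (by simpa using hAU 1 ⟨by norm_num, by norm_num⟩)).trans_lt hUfin.lt_top).ne
  have hH2 : ContinuousOn (fun x => radialDefect f x ^ 2) U :=
    (continuousOn_radialDefect hU hf).pow 2
  have hH2bound : ∀ x ∈ U, ‖radialDefect f x ^ 2‖ ≤ M ^ 2 := fun x hx => by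
    rw [norm_pow, Real.norm_eq_abs]
    exact pow_le_pow_left₀ (abs_nonneg _) (hM x hx) 2
  have hjoint : IntegrableOn (fun p : E × ℝ => radialDefect f (p.2 • p.1) ^ 2) (A ×ˢ Ι 1 c)
      (μ.prod volume) :=
    hH2.integrableOn_prod_smul hH2bound hA hAfin measurableSet_uIoc measure_Ioc_lt_top.ne
      fun r hr y hy => hAU r (hIoc hr) (smul_mem_smul_set hy)
  refine ⟨IntegrableOn.setIntegral_prod_left hjoint, ?_⟩
  refine (integral_integral_comp_smul_le μ (a := 1 / 2) (by norm_num) measurableSet_uIoc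
    measure_Ioc_lt_top.ne (fun r hr => (hIoc hr).1) (fun x => sq_nonneg _)
    (hH2.integrableOn_of_bound hU.measurableSet hUfin hH2bound)
    (fun r hr => hAU r (hIoc hr)) hjoint).trans ?_
  rw [one_div, inv_pow, inv_inv, Real.volume_real_uIoc]
  exact mul_le_of_le_one_left
    (mul_nonneg (by positivity) (integral_nonneg fun x => sq_nonneg (radialDefect f x)))
    (abs_le.2 ⟨by linarith [hc.1], by linarith [hc.2]⟩)

theorem setIntegral_sq_smul_le {U A : Set E} {f : E → ℝ} {M c : ℝ} (hU : IsOpen U)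
    (hUfin : μ U ≠ ∞) (hA : MeasurableSet A) (hAU : ∀ r ∈ Icc (1 / 2 : ℝ) 2, r • A ⊆ U)
    (hf : ContDiffOn ℝ 1 f U) (hM : ∀ x ∈ U, |radialDefect f x| ≤ M)
    (hfA : IntegrableOn (fun x => f x ^ 2) A μ) (hc : c ∈ Icc (1 / 2 : ℝ) 2) :
    ∫ x in c • A, f x ^ 2 ∂μ ≤ 2 ^ finrank ℝ E * (8 * ∫ x in A, f x ^ 2 ∂μ +
      128 * 2 ^ finrank ℝ E * ∫ x in U, radialDefect f x ^ 2 ∂μ) := by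
  set d := finrank ℝ E
  have hc0 : 0 < c := by linarith [hc.1]
  obtain ⟨hradial, hfubini⟩ :=
    integral_integral_sq_radialDefect_smul_le μ hU hUfin hA hAU hf hM hc
  have hcomp : ∫ y in A, f (c • y) ^ 2 ∂μ ≤
      8 * ∫ x in A, f x ^ 2 ∂μ + 128 * 2 ^ d * ∫ x in U, radialDefect f x ^ 2 ∂μ := calc
    _ ≤ ∫ y in A, (8 * f y ^ 2 + 128 * ∫ r in Ι 1 c, radialDefect f (r • y) ^ 2) ∂μ :=
      integral_mono_of_nonneg (ae_of_all _ fun y => sq_nonneg _)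
        ((hfA.const_mul 8).add (hradial.const_mul 128))
        (ae_restrict_of_forall_mem hA fun y hy => sq_apply_smul_le hU hf hc fun r hr =>
          hAU r (uIcc_subset_Icc ⟨by norm_num, by norm_num⟩ hc hr) (smul_mem_smul_set hy))
    _ = 8 * ∫ x in A, f x ^ 2 ∂μ +
        128 * ∫ y in A, (∫ r in Ι 1 c, radialDefect f (r • y) ^ 2) ∂μ := by
      rw [integral_add (hfA.const_mul 8) (hradial.const_mul 128),
        integral_const_mul, integral_const_mul]
    _ ≤ _ := by linarith
  have hscale : ∫ x in c • A, f x ^ 2 ∂μ = c ^ d * ∫ y in A, f (c • y) ^ 2 ∂μ := by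
    rw [Measure.setIntegral_comp_smul_of_pos μ (fun x => f x ^ 2) A hc0, smul_eq_mul,
      mul_inv_cancel_left₀ (by positivity)]
  rw [hscale]
  exact mul_le_mul (pow_le_pow_left₀ hc0.le hc.2 d) hcomp
    (integral_nonneg fun y => sq_nonneg _) (by positivity)

theorem setIntegral_sq_coneAnnulus_le {O : Set E} (hO : IsOpen O)
    (hcone : ∀ x ∈ O, ∀ l : ℝ, 0 < l → l • x ∈ O) {r R : ℝ} (hr : 0 ≤ r) (hrR : 2 * r < R)
    {f : E → ℝ} (hf : ContDiffOn ℝ 1 f (closure (coneAnnulus O (r / 2) (2 * R)))) :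
    ∫ x in coneAnnulus O (r / 2) (2 * R), f x ^ 2 ∂μ ≤ 512 * 4 ^ finrank ℝ E *
      (∫ x in coneAnnulus O (r / 2) (2 * R), radialDefect f x ^ 2 ∂μ +
        ∫ x in coneAnnulus O r R, f x ^ 2 ∂μ) := by
  set U := coneAnnulus O (r / 2) (2 * R)
  set A := coneAnnulus O r R
  set d := finrank ℝ E
  have hU : IsOpen U := hO.coneAnnulus
  have hAU : ∀ c ∈ Icc (1 / 2 : ℝ) 2, c • A ⊆ U := fun c hc =>
    smul_coneAnnulus_subset_of_mem_Icc hcone hr (by linarith) hc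
  obtain ⟨M, hM⟩ := exists_bound_radialDefect hU isCompact_closure_coneAnnulus hf
  have hfU : IntegrableOn (fun x => f x ^ 2) U μ :=
    ((hf.continuousOn.pow 2).integrableOn_compact isCompact_closure_coneAnnulus).mono_set
      subset_closure
  have hfcA : ∀ c ∈ Icc (1 / 2 : ℝ) 2, IntegrableOn (fun x => f x ^ 2) (c • A) μ :=
    fun c hc => hfU.mono_set (hAU c hc)
  have hfA : IntegrableOn (fun x => f x ^ 2) A μ := by
    simpa using hfcA 1 ⟨by norm_num, by norm_num⟩
  have hpiece : ∀ c ∈ Icc (1 / 2 : ℝ) 2, ∫ x in c • A, f x ^ 2 ∂μ ≤ 2 ^ d *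
      (8 * ∫ x in A, f x ^ 2 ∂μ + 128 * 2 ^ d * ∫ x in U, radialDefect f x ^ 2 ∂μ) :=
    fun c hc => setIntegral_sq_smul_le μ hU
      ((measure_mono coneAnnulus_subset_ball).trans_lt measure_ball_lt_top).ne
      hO.coneAnnulus.measurableSet hAU (hf.mono subset_closure) hM hfA hc
  have h2 : (2 : ℝ) ∈ Icc (1 / 2) 2 := ⟨by norm_num, by norm_num⟩
  have h2inv : (2⁻¹ : ℝ) ∈ Icc (1 / 2) 2 := ⟨by norm_num, by norm_num⟩
  calc ∫ x in U, f x ^ 2 ∂μ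
      ≤ ∫ x in A ∪ (2 : ℝ) • A, f x ^ 2 ∂μ + ∫ x in (2⁻¹ : ℝ) • A, f x ^ 2 ∂μ :=
        setIntegral_le_add_of_subset_union (fun x => sq_nonneg _)
          (coneAnnulus_subset_union hcone hrR) (hfA.union (hfcA 2 h2)) (hfcA 2⁻¹ h2inv)
    _ ≤ ∫ x in A, f x ^ 2 ∂μ + ∫ x in (2 : ℝ) • A, f x ^ 2 ∂μ +
        ∫ x in (2⁻¹ : ℝ) • A, f x ^ 2 ∂μ := by
      gcongr
      exact setIntegral_le_add_of_subset_union (fun x => sq_nonneg _) subset_rfl hfA (hfcA 2 h2)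
    _ ≤ 512 * 4 ^ d * (∫ x in U, radialDefect f x ^ 2 ∂μ + ∫ x in A, f x ^ 2 ∂μ) := by
      have hsum := add_le_add (hpiece 2 h2) (hpiece 2⁻¹ h2inv)
      have hY : 0 ≤ ∫ x in A, f x ^ 2 ∂μ := integral_nonneg fun x => sq_nonneg _
      have hI : 0 ≤ ∫ x in U, radialDefect f x ^ 2 ∂μ := integral_nonneg fun x => sq_nonneg _
      have hd : 0 ≤ (2 : ℝ) ^ d - 1 := sub_nonneg.2 (one_le_pow₀ one_le_two)
      rw [show (4 : ℝ) ^ d = 2 ^ d * 2 ^ d by rw [← mul_pow]; norm_num]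
      nlinarith [mul_nonneg (mul_nonneg hd hd) hY, mul_nonneg hd hY,
        mul_nonneg (mul_nonneg hd hd) hI, mul_nonneg hd hI]

end HaarMeasure

/-- Annular Poincaré inequality with radial derivative on open cones: there is a universal
constant `C = C(d)` such that for every open cone `O` and every `C¹` function `f`,
`∫_{(B₄∖B_{1/4})∩O} f² ≤ C (∫_{(B₄∖B_{1/4})∩O} (x·∇f − f)² + ∫_{(B₂∖B_{1/2})∩O} f²)`. -/
theorem stmt9 (d : ℕ) :
    ∃ C > (0 : ℝ), ∀ (O : Set (EuclideanSpace ℝ (Fin d))), IsOpen O →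
      (∀ x ∈ O, ∀ l : ℝ, 0 < l → l • x ∈ O) →
      ∀ f : EuclideanSpace ℝ (Fin d) → ℝ,
        ContDiffOn ℝ 1 f (closure ((ball (0 : EuclideanSpace ℝ (Fin d)) 4 \
            closedBall 0 (1 / 4)) ∩ O)) →
        (∫ x in (ball (0 : EuclideanSpace ℝ (Fin d)) 4 \ closedBall 0 (1 / 4)) ∩ O,
            (f x) ^ 2)
          ≤ C * ((∫ x in (ball (0 : EuclideanSpace ℝ (Fin d)) 4 \ closedBall 0 (1 / 4)) ∩ O,
                ((inner ℝ x (gradient f x) : ℝ) - f x) ^ 2)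
            + ∫ x in (ball (0 : EuclideanSpace ℝ (Fin d)) 2 \ closedBall 0 (1 / 2)) ∩ O,
                (f x) ^ 2) := by
  refine ⟨512 * 4 ^ d, by positivity, fun O hO hcone f hf => ?_⟩
  have hgrad : ∀ x, inner ℝ x (gradient f x) = fderiv ℝ f x x := fun x => by
    simp [inner_gradient_right]
  have h := setIntegral_sq_coneAnnulus_le volume hO hcone (r := 1 / 2) (R := 2) (f := f)
    (by norm_num) (by norm_num)
  rw [show (1 / 2 : ℝ) / 2 = 1 / 4 by norm_num, show (2 : ℝ) * 2 = 4 by norm_num] at h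
  simpa only [coneAnnulus, radialDefect, hgrad, finrank_euclideanSpace_fin] using h hf
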